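/- arXiv:2302.09315 — 3 statements merged into one kernel-verified Lean document; each statement's English description precedes it below -/
import Mathlib

section
/- The Piecewise Mechanism satisfies ε-local differential privacy: for any two inputs v, v' ∈ [−1,1] and any output y ∈ [−C, C], the ratio of the output probability densities at y given input v versus given input v' lies in [e^{−ε}, e^{ε}]. -/
open Real

/-- Output density of the Piecewise Mechanism with budget `ε` on input `v`:
the high density `p = e^{ε/2}(e^{ε/2}-1)/(2(e^{ε/2}+1))` on `[l v, r v]`
and `p / e^{ε/2}` on the rest of `[-C, C]`. -/
noncomputable def pmDensity (ε v y : ℝ) : ℝ :=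
  let C := (Real.exp (ε / 2) + 1) / (Real.exp (ε / 2) - 1)
  let l := (C + 1) / 2 * v - (C - 1) / 2
  let r := l + C - 1
  let p := Real.exp (ε / 2) * (Real.exp (ε / 2) - 1) / (2 * (Real.exp (ε / 2) + 1))
  if l ≤ y ∧ y ≤ r then p else p / Real.exp (ε / 2)

/-- The Piecewise Mechanism satisfies ε-LDP: for any two inputs in `[-1,1]`
and any output in `[-C, C]`, the density ratio lies in `[e^{-ε}, e^{ε}]`. -/
theorem pm_satisfies_ldp (ε : ℝ) (hε : 0 < ε)
    (v v' y : ℝ) (hv : v ∈ Set.Icc (-1 : ℝ) 1) (hv' : v' ∈ Set.Icc (-1 : ℝ) 1)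
    (hy : y ∈ Set.Icc (-( (Real.exp (ε / 2) + 1) / (Real.exp (ε / 2) - 1)))
                      ((Real.exp (ε / 2) + 1) / (Real.exp (ε / 2) - 1))) :
    Real.exp (-ε) ≤ pmDensity ε v y / pmDensity ε v' y ∧
    pmDensity ε v y / pmDensity ε v' y ≤ Real.exp ε := by
  have hE : 1 < Real.exp (ε / 2) := by
    have : 0 < ε / 2 := by linarith
    calc (1:ℝ) = Real.exp 0 := (Real.exp_zero).symm
    _ < Real.exp (ε / 2) := Real.exp_lt_exp.mpr this
  have hEpos : 0 < Real.exp (ε / 2) := by positivity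
  set p := Real.exp (ε / 2) * (Real.exp (ε / 2) - 1) / (2 * (Real.exp (ε / 2) + 1)) with hp
  have hppos : 0 < p := by
    apply div_pos
    · nlinarith
    · nlinarith
  have hhalf : Real.exp (ε / 2) ≤ Real.exp ε := Real.exp_le_exp.mpr (by linarith)
  have hnegle : Real.exp (-ε) ≤ 1 := by
    calc Real.exp (-ε) ≤ Real.exp 0 := Real.exp_le_exp.mpr (by linarith)
    _ = 1 := Real.exp_zero
  have hle1 : (1:ℝ) ≤ Real.exp ε := by
    calc (1:ℝ) = Real.exp 0 := Real.exp_zero.symm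
    _ ≤ Real.exp ε := Real.exp_le_exp.mpr (by linarith)
  have hneg : Real.exp (-ε) ≤ (Real.exp (ε / 2))⁻¹ := by
    rw [← Real.exp_neg]
    exact Real.exp_le_exp.mpr (by linarith)
  have hinvle : (Real.exp (ε / 2))⁻¹ ≤ Real.exp ε := by
    calc (Real.exp (ε / 2))⁻¹ ≤ 1 := by
          rw [inv_le_one_iff₀]; right; linarith
    _ ≤ Real.exp ε := hle1
  unfold pmDensity
  simp only [← hp]
  split_ifs with h1 h2 h2
  · rw [div_self (ne_of_gt hppos)]
    exact ⟨hnegle, hle1⟩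
  · rw [div_div_eq_mul_div, mul_comm, mul_div_assoc, div_self (ne_of_gt hppos), mul_one]
    constructor
    · calc Real.exp (-ε) ≤ 1 := hnegle
      _ ≤ Real.exp (ε / 2) := le_of_lt hE
    · exact hhalf
  · have : p / Real.exp (ε / 2) / p = (Real.exp (ε / 2))⁻¹ := by
      field_simp
    rw [this]
    exact ⟨hneg, hinvle⟩
  · have hne : p / Real.exp (ε / 2) ≠ 0 := by positivity
    rw [div_self hne]
    exact ⟨hnegle, hle1⟩
end

section
/- Let ε > 0 and C = (e^{ε/2}+1)/(e^{ε/2}−1). For any v ∈ [−1, 1], set l(v) = ((C+1)/2)v − (C−1)/2 and r(v) = l(v) + C − 1. Then [l(v), r(v)] ⊆ [−C, C], and the output of the Piecewise Mechanism — uniform on [l(v), r(v)] with probability e^{ε/2}/(e^{ε/2}+1) and uniform on [−C, l(v)) ∪ (r(v), C] with probability 1/(e^{ε/2}+1) — is an unbiased estimator of v, i.e., its expectation equals v. -/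
open intervalIntegral

/-- The Piecewise Mechanism is unbiased: `[l v, r v] ⊆ [-C, C]` and the
expectation of the output (uniform on `[l v, r v]` with probability
`e^{ε/2}/(e^{ε/2}+1)`, otherwise uniform on the complement in `[-C, C]`)
equals `v`. -/
theorem pm_unbiased (ε : ℝ) (hε : 0 < ε) (v : ℝ) (hv : v ∈ Set.Icc (-1 : ℝ) 1) :
    let C := (Real.exp (ε / 2) + 1) / (Real.exp (ε / 2) - 1)
    let l := (C + 1) / 2 * v - (C - 1) / 2
    let r := l + C - 1
    Set.Icc l r ⊆ Set.Icc (-C) C ∧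
    Real.exp (ε / 2) / (Real.exp (ε / 2) + 1) * ((C - 1)⁻¹ * ∫ y in l..r, y)
      + 1 / (Real.exp (ε / 2) + 1) *
          ((C + 1)⁻¹ * ((∫ y in (-C)..l, y) + ∫ y in r..C, y)) = v := by
  intro C l r
  obtain ⟨hv1, hv2⟩ := hv
  have hE : 1 < Real.exp (ε / 2) := by
    calc (1:ℝ) = Real.exp 0 := (Real.exp_zero).symm
    _ < Real.exp (ε / 2) := Real.exp_lt_exp.mpr (by linarith)
  have hEm : 0 < Real.exp (ε / 2) - 1 := by linarith
  have hEp : 0 < Real.exp (ε / 2) + 1 := by linarith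
  have hC1 : 1 < C := by
    rw [show C = (Real.exp (ε / 2) + 1) / (Real.exp (ε / 2) - 1) from rfl,
      lt_div_iff₀ hEm]
    linarith
  have hr : r = l + C - 1 := rfl
  have hl : l = (C + 1) / 2 * v - (C - 1) / 2 := rfl
  have hc : C = (Real.exp (ε / 2) + 1) / (Real.exp (ε / 2) - 1) := rfl
  constructor
  · apply Set.Icc_subset_Icc
    · rw [hl]; nlinarith
    · rw [hr, hl]; nlinarith
  · simp only [integral_id]
    rw [hr, hl, hc]
    field_simp
    ring
end

section
/- Let V_L and V_R be finite multisets of reals with V_L ⊆ [D_L, O] and V_R ⊆ [O, D_R], and suppose Σ_{v∈V_L}(v − O) + Σ_{v∈V_R}(v − O) < 0 and V_R is nonempty. Let y_r = max V_R. Then there exists a submultiset Y_L ⊆ V_L such that Σ_{v∈Y_L}(v − O) + (y_r − O) ≤ 0, and for every y_l ∈ Y_L, Σ_{v∈Y_L∖{y_l}}(v − O) + (y_r − O) > 0 (i.e., Y_L is a minimal subset pushing the combined deviation nonpositive). -/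
/-- Existence of a minimal left-side subset absorbing the largest right-side
poison value: if the total deviation is negative and `y_r = max V_R`, there is
`Y_L ⊆ V_L` with `Σ_{v∈Y_L}(v-O) + (y_r-O) ≤ 0` but removing any element of
`Y_L` makes this sum positive. -/
theorem minimal_left_subset_exists (DL DR O yr : ℝ)
    (VL VR : Multiset ℝ)
    (hVL : ∀ v ∈ VL, v ∈ Set.Icc DL O) (hVR : ∀ v ∈ VR, v ∈ Set.Icc O DR)
    (hneg : (VL.map (fun v => v - O)).sum + (VR.map (fun v => v - O)).sum < 0)
    (hyr_mem : yr ∈ VR) (hyr_max : ∀ v ∈ VR, v ≤ yr) :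
    ∃ YL : Multiset ℝ, YL ≤ VL ∧
      (YL.map (fun v => v - O)).sum + (yr - O) ≤ 0 ∧
      ∀ yl ∈ YL, 0 < ((YL.erase yl).map (fun v => v - O)).sum + (yr - O) := by
  have hyr_sum : yr - O ≤ (VR.map (fun v => v - O)).sum := by
    apply Multiset.single_le_sum
    · intro x hx
      obtain ⟨v, hv, rfl⟩ := Multiset.mem_map.mp hx
      have := (hVR v hv).1
      linarith
    · exact Multiset.mem_map_of_mem _ hyr_mem
  classical
  set P : ℕ → Prop := fun n => ∃ YL : Multiset ℝ, YL ≤ VL ∧ YL.card = n ∧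
      (YL.map (fun v => v - O)).sum + (yr - O) ≤ 0 with hP
  have hP0 : P VL.card := ⟨VL, le_refl _, rfl, by linarith⟩
  have hex : ∃ n, P n := ⟨_, hP0⟩
  obtain ⟨YL, hle, hcard, hsum⟩ := Nat.find_spec hex
  refine ⟨YL, hle, hsum, ?_⟩
  intro yl hyl
  by_contra h
  push_neg at h
  have hlt : (YL.erase yl).card < Nat.find hex := by
    have hpos : 0 < YL.card := Multiset.card_pos.mpr (by exact fun h => by simp [h] at hyl)
    rw [Multiset.card_erase_of_mem hyl, Nat.pred_eq_sub_one]
    omega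
  exact Nat.find_min hex hlt ⟨YL.erase yl, le_trans (Multiset.erase_le _ _) hle, rfl, h⟩
end
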